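/- Let Θ be the canonical antisymmetric 2n×2n matrix, and suppose X is a real skew-symmetric 2n×2n matrix satisfying the Riccati equation X B̂ Θ_m B̂^T X − Â^T X − X Â − Ĉ^T Θ_p Ĉ = 0, and suppose X = T^T Θ T for some real nonsingular matrix T. Define Ã = TÂT^{-1}, B̃ = TB̂, C̃ = ĈT^{-1}. Then Θ B̃ Θ_m B̃^T Θ − Θ Ã − Ã^T Θ − C̃^T Θ_p C̃ = 0. -/
import Mathlib


open Matrix

/-- The canonical antisymmetric matrix `diag(J,...,J)` with `J = [[0,1],[-1,0]]`. -/
def canonicalTheta (d : ℕ) : Matrix (Fin d) (Fin d) ℝ :=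
  Matrix.of fun i j =>
    if (i : ℕ) % 2 = 0 ∧ (j : ℕ) = (i : ℕ) + 1 then 1
    else if (j : ℕ) % 2 = 0 ∧ (i : ℕ) = (j : ℕ) + 1 then -1 else 0

theorem stmt5 (n m p : ℕ)
    (Ahat : Matrix (Fin (2 * n)) (Fin (2 * n)) ℝ)
    (Bhat : Matrix (Fin (2 * n)) (Fin m) ℝ)
    (Chat : Matrix (Fin p) (Fin (2 * n)) ℝ)
    (X T : Matrix (Fin (2 * n)) (Fin (2 * n)) ℝ)
    (hX : Xᵀ = -X)
    (hRic : X * Bhat * canonicalTheta m * Bhatᵀ * X - Ahatᵀ * X - X * Ahat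
        - Chatᵀ * canonicalTheta p * Chat = 0)
    (hT : IsUnit T.det)
    (hXT : X = Tᵀ * canonicalTheta (2 * n) * T) :
    canonicalTheta (2 * n) * (T * Bhat) * canonicalTheta m * (T * Bhat)ᵀ * canonicalTheta (2 * n)
      - canonicalTheta (2 * n) * (T * Ahat * T⁻¹) - (T * Ahat * T⁻¹)ᵀ * canonicalTheta (2 * n)
      - (Chat * T⁻¹)ᵀ * canonicalTheta p * (Chat * T⁻¹) = 0 := by
  have hT' : IsUnit (Tᵀ).det := by rwa [Matrix.det_transpose]
  have hTheta : canonicalTheta (2 * n) = (Tᵀ)⁻¹ * X * T⁻¹ := by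
    simp [hXT, Matrix.mul_assoc, Matrix.mul_nonsing_inv _ hT,
      Matrix.nonsing_inv_mul_cancel_left _ _ hT']
  have key : canonicalTheta (2 * n) * (T * Bhat) * canonicalTheta m * (T * Bhat)ᵀ
        * canonicalTheta (2 * n)
      - canonicalTheta (2 * n) * (T * Ahat * T⁻¹) - (T * Ahat * T⁻¹)ᵀ * canonicalTheta (2 * n)
      - (Chat * T⁻¹)ᵀ * canonicalTheta p * (Chat * T⁻¹)
      = (Tᵀ)⁻¹ * (X * Bhat * canonicalTheta m * Bhatᵀ * X - Ahatᵀ * X - X * Ahat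
        - Chatᵀ * canonicalTheta p * Chat) * T⁻¹ := by
    rw [hTheta]
    simp only [Matrix.transpose_mul, Matrix.transpose_nonsing_inv, Matrix.transpose_transpose,
      Matrix.mul_sub, Matrix.sub_mul, Matrix.mul_assoc,
      Matrix.nonsing_inv_mul_cancel_left _ _ hT, Matrix.nonsing_inv_mul_cancel_left _ _ hT',
      Matrix.mul_nonsing_inv_cancel_left _ _ hT, Matrix.mul_nonsing_inv_cancel_left _ _ hT']
    abel
  rw [key, hRic, Matrix.mul_zero, Matrix.zero_mul]
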